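/- Let σ : [0,1] → (0,∞) be a left-continuous step function and let J(s) = ∫₀ˢ σ²(r) dr. Then there exists a unique non-increasing left-continuous step function s ↦ σ̄(s) such that the concave hull Ĵ of J satisfies Ĵ(s) = ∫₀ˢ σ̄²(r) dr for all s ∈ (0,1]. -/

import Mathlib

/-!
The concave hull of `J` is the piecewise linear interpolant of `J` through the vertices of the
upper hull of the nodes `(λᵢ, J λᵢ)`. The vertices are found greedily: the successor of a vertex
is a node maximizing the slope seen from it, so all later nodes lie below that chord and the chord
slopes decrease. Hence `σ̄ = √slope` is a non-increasing step function and the primitive of `σ̄²`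
is concave; it dominates `J` because it does at the nodes and `J` is affine between them, and it
lies below every concave majorant because on each hull segment it is a chord of the graph of `J`.
Uniqueness: on a subinterval `(t, s]` of a piece, the primitive of a step function grows by its
value times `s - t`.
-/

open MeasureTheory intervalIntegral Set

section Partition

variable {α : Type*} [LinearOrder α] {mu : ℕ → α} {m j : ℕ} {s : α}

lemma StrictMonoOn.apply_lt_apply_succ (hmu : StrictMonoOn mu (Iic m)) (hj : j < m) :
    mu j < mu (j + 1) :=
  hmu (mem_Iic.2 hj.le) (mem_Iic.2 hj) (Nat.lt_succ_self j)

lemma StrictMonoOn.mem_Icc_of_le (hmu : StrictMonoOn mu (Iic m)) (hj : j ≤ m) :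
    mu j ∈ Icc (mu 0) (mu m) :=
  ⟨hmu.monotoneOn (mem_Iic.2 (Nat.zero_le m)) hj (Nat.zero_le j),
    hmu.monotoneOn hj (mem_Iic.2 le_rfl) hj⟩

lemma exists_lt_mem_Ioc (h0 : mu 0 < s) (hm : s ≤ mu m) :
    ∃ j < m, s ∈ Ioc (mu j) (mu (j + 1)) := by
  classical
  have hex : ∃ n, s ≤ mu n := ⟨m, hm⟩
  obtain ⟨j, hj⟩ : ∃ j, Nat.find hex = j + 1 :=
    Nat.exists_eq_add_one.2 (Nat.pos_of_ne_zero fun h => (Nat.find_spec hex).not_gt (h ▸ h0))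
  refine ⟨j, ?_, ?_, hj ▸ Nat.find_spec hex⟩
  · have := Nat.find_min' hex hm
    omega
  · exact lt_of_not_ge (Nat.find_min hex (by omega))

lemma exists_lt_mem_Icc (hmu : StrictMonoOn mu (Iic m)) (hm : 0 < m) (h0 : mu 0 ≤ s)
    (hsm : s ≤ mu m) : ∃ j < m, s ∈ Icc (mu j) (mu (j + 1)) := by
  rcases h0.eq_or_lt with rfl | h0
  · exact ⟨0, hm, le_rfl, (hmu.apply_lt_apply_succ hm).le⟩
  · obtain ⟨j, hj, hs⟩ := exists_lt_mem_Ioc h0 hsm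
    exact ⟨j, hj, Ioc_subset_Icc_self hs⟩

def pieceIndex (mu : ℕ → α) (m : ℕ) (s : α) : ℕ :=
  ((Finset.range m).filter fun i => mu (i + 1) < s).card

lemma pieceIndex_mono : Monotone (pieceIndex mu m) := fun _ _ hst =>
  Finset.card_le_card (Finset.monotone_filter_right _ fun _ _ h => h.trans_le hst)

lemma pieceIndex_eq (hmu : StrictMonoOn mu (Iic m)) (hj : j < m)
    (hs : s ∈ Ioc (mu j) (mu (j + 1))) : pieceIndex mu m s = j := by
  suffices (Finset.range m).filter (fun i => mu (i + 1) < s) = Finset.range j by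
    rw [pieceIndex, this, Finset.card_range]
  ext i
  simp only [Finset.mem_filter, Finset.mem_range]
  constructor
  · rintro ⟨him, hi⟩
    by_contra! hji
    exact (hs.2.trans (hmu.monotoneOn (mem_Iic.2 (by omega)) (mem_Iic.2 him) (by omega))).not_gt hi
  · intro hij
    exact ⟨by omega,
      (hmu.monotoneOn (mem_Iic.2 (by omega)) (mem_Iic.2 hj.le) (by omega)).trans_lt hs.1⟩

end Partition

section StepFunction

variable {mu : ℕ → ℝ} {m j : ℕ} {f : ℝ → ℝ}

def IsStepOn (mu : ℕ → ℝ) (m : ℕ) (f : ℝ → ℝ) : Prop :=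
  ∀ j < m, ∀ s ∈ Ioc (mu j) (mu (j + 1)), f s = f (mu (j + 1))

lemma isStepOn_iff : IsStepOn mu m f ↔
    ∀ j, 1 ≤ j → j ≤ m → ∀ s ∈ Ioc (mu (j - 1)) (mu j), f s = f (mu j) := by
  constructor
  · intro hf j hj1 hjm
    obtain ⟨j, rfl⟩ := Nat.exists_eq_add_of_le' hj1
    simpa using hf j (by omega)
  · intro hf j hj
    simpa using hf (j + 1) (by omega) (by omega)

lemma IsStepOn.comp (hf : IsStepOn mu m f) (g : ℝ → ℝ) : IsStepOn mu m (g ∘ f) :=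
  fun j hj s hs => congrArg g (hf j hj s hs)

lemma isStepOn_comp_pieceIndex (hmu : StrictMonoOn mu (Iic m)) (c : ℕ → ℝ) :
    IsStepOn mu m fun s => c (pieceIndex mu m s) := fun j hj s hs => by
  dsimp only
  rw [pieceIndex_eq hmu hj hs,
    pieceIndex_eq hmu hj ⟨hmu.apply_lt_apply_succ hj, le_rfl⟩]

lemma antitoneOn_comp_pieceIndex (hmu : StrictMonoOn mu (Iic m)) {c : ℕ → ℝ}
    (hc : AntitoneOn c (Iio m)) :
    AntitoneOn (fun s => c (pieceIndex mu m s)) (Ioc (mu 0) (mu m)) := by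
  intro s hs t ht hst
  dsimp only
  obtain ⟨i, hi, his⟩ := exists_lt_mem_Ioc hs.1 hs.2
  obtain ⟨j, hj, hjt⟩ := exists_lt_mem_Ioc ht.1 ht.2
  have hij := pieceIndex_mono (mu := mu) (m := m) hst
  rw [pieceIndex_eq hmu hi his, pieceIndex_eq hmu hj hjt] at hij ⊢
  exact hc hi hj hij

lemma IsStepOn.intervalIntegrable (hf : IsStepOn mu m f) (hmu : StrictMonoOn mu (Iic m))
    {a b : ℝ} (ha : a ∈ Icc (mu 0) (mu m)) (hb : b ∈ Icc (mu 0) (mu m)) :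
    IntervalIntegrable f volume a b := by
  have hpiece : ∀ j < m, IntervalIntegrable f volume (mu j) (mu (j + 1)) := fun j hj => by
    rw [intervalIntegrable_iff_integrableOn_Ioc_of_le (hmu.apply_lt_apply_succ hj).le]
    exact (integrableOn_const measure_Ioc_lt_top.ne).congr_fun
      (fun s hs => (hf j hj s hs).symm) measurableSet_Ioc
  exact (IntervalIntegrable.trans_iterate hpiece).mono_set
    (uIcc_subset_uIcc (Icc_subset_uIcc ha) (Icc_subset_uIcc hb))

lemma IsStepOn.integral_sub_integral (hf : IsStepOn mu m f) (hmu : StrictMonoOn mu (Iic m))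
    (hj : j < m) {s t : ℝ} (ht : mu j ≤ t) (hts : t ≤ s) (hs : s ≤ mu (j + 1)) :
    (∫ r in mu 0..s, f r) - ∫ r in mu 0..t, f r = f (mu (j + 1)) * (s - t) := by
  have hj0 := (hmu.mem_Icc_of_le hj.le).1
  have hj1 := (hmu.mem_Icc_of_le (Nat.succ_le_of_lt hj)).2
  have h0 := hmu.mem_Icc_of_le (Nat.zero_le m)
  rw [integral_interval_sub_left (hf.intervalIntegrable hmu h0 ⟨by linarith, by linarith⟩)
      (hf.intervalIntegrable hmu h0 ⟨by linarith, by linarith⟩),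
    intervalIntegral.integral_congr_ae (g := fun _ => f (mu (j + 1))),
    intervalIntegral.integral_const, smul_eq_mul, mul_comm]
  refine Filter.Eventually.of_forall fun r hr => ?_
  rw [uIoc_of_le hts] at hr
  exact hf j hj r ⟨ht.trans_lt hr.1, hr.2.trans hs⟩

lemma IsStepOn.strictMonoOn_integral (hf : IsStepOn mu m f) (hmu : StrictMonoOn mu (Iic m))
    (hpos : ∀ j < m, 0 < f (mu (j + 1))) :
    StrictMonoOn (fun i => ∫ r in mu 0..mu i, f r) (Iic m) :=
  strictMonoOn_Iic_of_lt_succ fun j hj => by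
    have hstep := hf.integral_sub_integral hmu hj le_rfl (hmu.apply_lt_apply_succ hj).le le_rfl
    have := mul_pos (hpos j hj) (sub_pos.2 (hmu.apply_lt_apply_succ hj))
    simp only [Order.succ_eq_add_one]
    linarith

lemma eq_add_slope_mul_sub (f : ℝ → ℝ) (a b : ℝ) : f b = f a + slope f a b * (b - a) := by
  have := sub_smul_slope f a b
  rw [smul_eq_mul, vsub_eq_sub] at this
  linarith

lemma IsStepOn.integral_eq_of_slope {P : ℝ → ℝ} (hf : IsStepOn mu m f)
    (hmu : StrictMonoOn mu (Iic m)) (hslope : ∀ j < m, f (mu (j + 1)) = slope P (mu j) (mu (j + 1)))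
    (hj : j < m) {s : ℝ} (hs : s ∈ Icc (mu j) (mu (j + 1))) :
    ∫ r in mu 0..s, f r = P (mu j) - P (mu 0) + slope P (mu j) (mu (j + 1)) * (s - mu j) := by
  induction j generalizing s with
  | zero =>
    have := hf.integral_sub_integral hmu hj le_rfl hs.1 hs.2
    rw [integral_same, hslope 0 hj] at this
    linarith
  | succ j ih =>
    have hstep := hf.integral_sub_integral hmu hj le_rfl hs.1 hs.2
    have hprev := ih (by omega) ⟨(hmu.apply_lt_apply_succ (j := j) (by omega)).le, le_rfl⟩
    have hnode := eq_add_slope_mul_sub P (mu j) (mu (j + 1))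
    rw [hslope _ hj] at hstep
    linarith

lemma IsStepOn.eq_of_integral_eq {g : ℝ → ℝ} {nu : ℕ → ℝ} {n : ℕ} {a s : ℝ}
    (hf : IsStepOn mu m f) (hmu : StrictMonoOn mu (Iic m)) (hmu0 : mu 0 = a)
    (hg : IsStepOn nu n g) (hnu : StrictMonoOn nu (Iic n)) (hnu0 : nu 0 = a)
    (has : a < s) (hsm : s ≤ mu m) (hsn : s ≤ nu n)
    (heq : ∀ t ∈ Ioc a s, ∫ r in a..t, f r = ∫ r in a..t, g r) : f s = g s := by
  subst hmu0
  obtain ⟨i, hi, hsi⟩ := exists_lt_mem_Ioc has hsm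
  obtain ⟨j, hj, hsj⟩ := exists_lt_mem_Ioc (hnu0 ▸ has) hsn
  obtain ⟨t, hit, hjt, hts⟩ : ∃ t, mu i ≤ t ∧ nu j ≤ t ∧ t < s :=
    ⟨max (mu i) (nu j), le_max_left _ _, le_max_right _ _, max_lt hsi.1 hsj.1⟩
  have hft := hf.integral_sub_integral hmu hi hit hts.le hsi.2
  have hgt := hg.integral_sub_integral hnu hj hjt hts.le hsj.2
  rw [hnu0] at hgt
  have heqt : ∫ r in mu 0..t, f r = ∫ r in mu 0..t, g r := by
    rcases ((hmu.mem_Icc_of_le hi.le).1.trans hit).eq_or_lt with h | h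
    · rw [← h, integral_same, integral_same]
    · exact heq t ⟨h, hts.le⟩
  rw [hf i hi s hsi, hg j hj s hsj]
  exact mul_right_cancel₀ (sub_pos.2 hts).ne' (by rw [← hft, ← hgt, heq s ⟨has, le_rfl⟩, heqt])

end StepFunction

section Concavity

lemma ConcaveOn.affine_le_of_endpoints {g : ℝ → ℝ} {u v a b s : ℝ} (hg : ConcaveOn ℝ (Icc u v) g)
    (hu : a ≤ g u) (hv : a + b * (v - u) ≤ g v) (hs : s ∈ Icc u v) : a + b * (s - u) ≤ g s := by
  have hline : ConvexOn ℝ (Icc u v) fun x => b * x + (a - b * u) :=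
    ((b • LinearMap.id : ℝ →ₗ[ℝ] ℝ).convexOn (convex_Icc u v)).add_const _
  have := (hg.sub hline).min_le_of_mem_Icc (left_mem_Icc.2 (hs.1.trans hs.2))
    (right_mem_Icc.2 (hs.1.trans hs.2)) hs
  simp only [Pi.sub_apply, min_le_iff] at this
  rcases this with h | h <;> linarith

lemma concaveOn_integral_of_antitoneOn {h : ℝ → ℝ} {a b : ℝ}
    (hint : IntervalIntegrable h volume a b) (hh : AntitoneOn h (Ioo a b)) :
    ConcaveOn ℝ (Icc a b) fun s => ∫ r in a..s, h r := by
  have hsub : ∀ x ∈ Icc a b, ∀ y ∈ Icc a b, IntervalIntegrable h volume x y := fun x hx y hy =>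
    hint.mono_set (uIcc_subset_uIcc (Icc_subset_uIcc hx) (Icc_subset_uIcc hy))
  refine concaveOn_of_slope_anti_adjacent (convex_Icc a b) fun {x y z} hx hz hxy hyz => ?_
  have hy : y ∈ Icc a b := ⟨hx.1.trans hxy.le, hyz.le.trans hz.2⟩
  have hyo : y ∈ Ioo a b := ⟨hx.1.trans_lt hxy, hyz.trans_le hz.2⟩
  have ha : a ∈ Icc a b := left_mem_Icc.2 (hx.1.trans hx.2)
  have hright : ∫ r in y..z, h r ≤ h y * (z - y) := by
    simpa [mul_comm] using integral_mono_on_of_le_Ioo hyz.le (hsub y hy z hz)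
      intervalIntegrable_const fun r hr =>
        hh hyo ⟨hyo.1.trans hr.1, hr.2.trans_le hz.2⟩ hr.1.le
  have hleft : h y * (y - x) ≤ ∫ r in x..y, h r := by
    simpa [mul_comm] using integral_mono_on_of_le_Ioo hxy.le intervalIntegrable_const
      (hsub x hx y hy) fun r hr =>
        hh ⟨hx.1.trans_lt hr.1, hr.2.trans hyo.2⟩ hyo hr.2.le
  rw [integral_interval_sub_left (hsub a ha z hz) (hsub a ha y hy),
    integral_interval_sub_left (hsub a ha y hy) (hsub a ha x hx)]
  calc (∫ r in y..z, h r) / (z - y) ≤ h y := (div_le_iff₀ (sub_pos.2 hyz)).2 hright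
    _ ≤ (∫ r in x..y, h r) / (y - x) := (le_div_iff₀ (sub_pos.2 hxy)).2 hleft

lemma le_of_le_of_affineOn_pieces {J G : ℝ → ℝ} {lam : ℕ → ℝ} {M : ℕ}
    (hlam : StrictMonoOn lam (Iic M)) (hM : 0 < M) (hG : ConcaveOn ℝ (Icc (lam 0) (lam M)) G)
    (hJ : ∀ i < M, ∃ b, ∀ s ∈ Icc (lam i) (lam (i + 1)), J s = J (lam i) + b * (s - lam i))
    (hnodes : ∀ i ≤ M, J (lam i) ≤ G (lam i)) {s : ℝ} (hs : s ∈ Icc (lam 0) (lam M)) :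
    J s ≤ G s := by
  obtain ⟨i, hi, his⟩ := exists_lt_mem_Icc hlam hM hs.1 hs.2
  obtain ⟨b, hb⟩ := hJ i hi
  have hpiece : Icc (lam i) (lam (i + 1)) ⊆ Icc (lam 0) (lam M) :=
    Icc_subset_Icc (hlam.mem_Icc_of_le hi.le).1 (hlam.mem_Icc_of_le (Nat.succ_le_of_lt hi)).2
  rw [hb s his]
  refine (hG.subset hpiece (convex_Icc _ _)).affine_le_of_endpoints (hnodes i hi.le) ?_ his
  rw [← hb _ (right_mem_Icc.2 (hlam.apply_lt_apply_succ hi).le)]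
  exact hnodes (i + 1) hi

lemma sInf_concaveMajorants_eq {J G : ℝ → ℝ} {a c u v b s : ℝ}
    (hG : ConcaveOn ℝ (Icc a c) G) (hJG : ∀ x ∈ Icc a c, J x ≤ G x)
    (hu : u ∈ Icc a c) (hv : v ∈ Icc a c) (hs : s ∈ Icc u v)
    (hJv : J v = J u + b * (v - u)) (hGs : G s = J u + b * (s - u)) :
    sInf {y : ℝ | ∃ g : ℝ → ℝ, ConcaveOn ℝ (Icc a c) g ∧ (∀ x ∈ Icc a c, J x ≤ g x) ∧ y = g s} =
      G s := by
  refine IsLeast.csInf_eq ⟨⟨G, hG, hJG, rfl⟩, ?_⟩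
  rintro _ ⟨g, hg, hJg, rfl⟩
  rw [hGs]
  exact (hg.subset (Icc_subset_Icc hu.1 hv.2) (convex_Icc u v)).affine_le_of_endpoints (hJg u hu)
    (hJv ▸ hJg v hv) hs

end Concavity

section UpperHull

lemma exists_upperHull_indices (f : ℝ → ℝ) {x : ℕ → ℝ} {M : ℕ} (hx : StrictMonoOn x (Iic M))
    {a : ℕ} (ha : a ≤ M) :
    ∃ k, ∃ idx : ℕ → ℕ, idx 0 = a ∧ idx k = M ∧ (∀ j < k, idx j < idx (j + 1)) ∧
      ∀ j < k, ∀ i, idx j ≤ i → i ≤ M →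
        f (x i) ≤ f (x (idx j)) + slope f (x (idx j)) (x (idx (j + 1))) * (x i - x (idx j)) := by
  induction hd : M - a using Nat.strong_induction_on generalizing a with
  | _ d ih =>
  rcases ha.eq_or_lt with rfl | ha
  · exact ⟨0, fun _ => a, rfl, rfl, by simp, by simp⟩
  -- the next vertex maximizes the slope seen from `x a`
  obtain ⟨n, hn, hmax⟩ := (Finset.Ioc a M).exists_max_image (fun i => slope f (x a) (x i))
    ⟨M, by simp [ha]⟩
  rw [Finset.mem_Ioc] at hn
  have hchord : ∀ i, a ≤ i → i ≤ M →
      f (x i) ≤ f (x a) + slope f (x a) (x n) * (x i - x a) := by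
    intro i hai hiM
    rcases hai.eq_or_lt with rfl | hai
    · simp
    have hxi : x a < x i := hx (mem_Iic.2 ha.le) (mem_Iic.2 hiM) hai
    have hslope := hmax i (Finset.mem_Ioc.2 ⟨hai, hiM⟩)
    rw [eq_add_slope_mul_sub f (x a) (x i)]
    nlinarith
  obtain ⟨k, idx, h0, hk, hmono, hhull⟩ := ih (M - n) (by omega) hn.2 rfl
  refine ⟨k + 1, fun | 0 => a | j + 1 => idx j, rfl, hk, ?_, ?_⟩
  · rintro (_ | j) hj
    · simpa [h0] using hn.1
    · exact hmono j (by omega)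
  · rintro (_ | j) hj i hi hiM
    · simpa [h0] using hchord i hi hiM
    · exact hhull j (by omega) i hi hiM

lemma exists_upperHull_nodes (f : ℝ → ℝ) {x : ℕ → ℝ} {M : ℕ} (hx : StrictMonoOn x (Iic M))
    (hf : StrictMonoOn (f ∘ x) (Iic M)) :
    ∃ k, ∃ mu : ℕ → ℝ, mu 0 = x 0 ∧ mu k = x M ∧ StrictMonoOn mu (Iic k) ∧
      (∀ j < k, 0 < slope f (mu j) (mu (j + 1))) ∧
      AntitoneOn (fun j => slope f (mu j) (mu (j + 1))) (Iio k) ∧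
      ∀ j < k, ∀ i ≤ M, mu j ≤ x i →
        f (x i) ≤ f (mu j) + slope f (mu j) (mu (j + 1)) * (x i - mu j) := by
  obtain ⟨k, idx, h0, hk, hidx, hhull⟩ := exists_upperHull_indices f hx (Nat.zero_le M)
  have hidx' : StrictMonoOn idx (Iic k) := strictMonoOn_Iic_of_lt_succ hidx
  have hmaps : MapsTo idx (Iic k) (Iic M) := fun j hj =>
    hk ▸ hidx'.monotoneOn hj (le_refl k) hj
  have hmem : ∀ j < k, idx j ∈ Iic M ∧ idx (j + 1) ∈ Iic M := fun j hj =>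
    ⟨hmaps (show j ≤ k by omega), hmaps (show j + 1 ≤ k by omega)⟩
  refine ⟨k, x ∘ idx, by simp [h0], by simp [hk], hx.comp hidx' hmaps, ?_, ?_, ?_⟩
  · intro j hj
    have hlt := hx (hmem j hj).1 (hmem j hj).2 (hidx j hj)
    exact (slope_pos_iff_of_le hlt.le).2 (hf (hmem j hj).1 (hmem j hj).2 (hidx j hj))
  · refine antitoneOn_of_succ_le ordConnected_Iio fun j _ _ hj => ?_
    rw [Order.succ_eq_add_one, mem_Iio] at hj
    have hlt := hx (hmem (j + 1) hj).1 (hmem (j + 1) hj).2 (hidx (j + 1) hj)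
    -- the vertex after next lies below the chord through the two preceding vertices
    have hbelow := hhull j (by omega) (idx (j + 2))
      ((hidx j (by omega)).trans (hidx (j + 1) hj)).le (hmem (j + 1) hj).2
    have e1 := eq_add_slope_mul_sub f (x (idx j)) (x (idx (j + 1)))
    have e2 := eq_add_slope_mul_sub f (x (idx (j + 1))) (x (idx (j + 2)))
    simp only [Function.comp_apply, Order.succ_eq_add_one]
    nlinarith
  · intro j hj i hi hxi
    exact hhull j hj i ((hx.le_iff_le (hmem j hj).1 hi).1 hxi) hi

end UpperHull

section SqrtSlopeStep

variable {P : ℝ → ℝ} {mu : ℕ → ℝ} {m j : ℕ}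

noncomputable def sqrtSlopeStep (P : ℝ → ℝ) (mu : ℕ → ℝ) (m : ℕ) (s : ℝ) : ℝ :=
  √(slope P (mu (pieceIndex mu m s)) (mu (pieceIndex mu m s + 1)))

lemma sqrtSlopeStep_eq (hmu : StrictMonoOn mu (Iic m)) (hj : j < m) {s : ℝ}
    (hs : s ∈ Ioc (mu j) (mu (j + 1))) :
    sqrtSlopeStep P mu m s = √(slope P (mu j) (mu (j + 1))) := by
  rw [sqrtSlopeStep, pieceIndex_eq hmu hj hs]

lemma isStepOn_sqrtSlopeStep (hmu : StrictMonoOn mu (Iic m)) :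
    IsStepOn mu m (sqrtSlopeStep P mu m) :=
  isStepOn_comp_pieceIndex hmu fun j => √(slope P (mu j) (mu (j + 1)))

lemma antitoneOn_sqrtSlopeStep (hmu : StrictMonoOn mu (Iic m))
    (hanti : AntitoneOn (fun j => slope P (mu j) (mu (j + 1))) (Iio m)) :
    AntitoneOn (sqrtSlopeStep P mu m) (Ioc (mu 0) (mu m)) :=
  antitoneOn_comp_pieceIndex (c := fun j => √(slope P (mu j) (mu (j + 1)))) hmu
    fun _ hi _ hj hij => Real.sqrt_le_sqrt (hanti hi hj hij)

lemma integral_sqrtSlopeStep_sq (hmu : StrictMonoOn mu (Iic m))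
    (hslope : ∀ j < m, 0 ≤ slope P (mu j) (mu (j + 1))) (hj : j < m) {s : ℝ}
    (hs : s ∈ Icc (mu j) (mu (j + 1))) :
    ∫ r in mu 0..s, sqrtSlopeStep P mu m r ^ 2 =
      P (mu j) - P (mu 0) + slope P (mu j) (mu (j + 1)) * (s - mu j) :=
  ((isStepOn_sqrtSlopeStep hmu).comp (· ^ 2)).integral_eq_of_slope hmu (fun j hj => by
    rw [Function.comp_apply, sqrtSlopeStep_eq hmu hj ⟨hmu.apply_lt_apply_succ hj, le_rfl⟩,
      Real.sq_sqrt (hslope j hj)]) hj hs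

lemma concaveOn_integral_sqrtSlopeStep_sq (hmu : StrictMonoOn mu (Iic m))
    (hanti : AntitoneOn (fun j => slope P (mu j) (mu (j + 1))) (Iio m)) :
    ConcaveOn ℝ (Icc (mu 0) (mu m)) fun s => ∫ r in mu 0..s, sqrtSlopeStep P mu m r ^ 2 :=
  concaveOn_integral_of_antitoneOn (((isStepOn_sqrtSlopeStep hmu).comp (· ^ 2)).intervalIntegrable
    hmu (hmu.mem_Icc_of_le (Nat.zero_le m)) (hmu.mem_Icc_of_le le_rfl))
    fun _ hx _ hy hxy => pow_le_pow_left₀ (Real.sqrt_nonneg _)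
      (antitoneOn_sqrtSlopeStep hmu hanti (Ioo_subset_Ioc_self hx) (Ioo_subset_Ioc_self hy) hxy) 2

end SqrtSlopeStep

theorem exists_antitone_step_integral_sq_eq_concaveHull {J : ℝ → ℝ} {lam : ℕ → ℝ} {M : ℕ}
    (hlam : StrictMonoOn lam (Iic M)) (hM : 0 < M) (hJ0 : J (lam 0) = 0)
    (hJ : ∀ i < M, ∃ b, ∀ s ∈ Icc (lam i) (lam (i + 1)), J s = J (lam i) + b * (s - lam i))
    (hJnodes : StrictMonoOn (J ∘ lam) (Iic M)) :
    ∃ σbar : ℝ → ℝ, (∃ k, 0 < k ∧ ∃ mu : ℕ → ℝ, mu 0 = lam 0 ∧ mu k = lam M ∧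
        StrictMonoOn mu (Iic k) ∧ IsStepOn mu k σbar) ∧
      AntitoneOn σbar (Ioc (lam 0) (lam M)) ∧ (∀ s ∈ Ioc (lam 0) (lam M), 0 < σbar s) ∧
      ∀ s ∈ Ioc (lam 0) (lam M),
        sInf {y : ℝ | ∃ g : ℝ → ℝ, ConcaveOn ℝ (Icc (lam 0) (lam M)) g ∧
          (∀ x ∈ Icc (lam 0) (lam M), J x ≤ g x) ∧ y = g s} = ∫ r in lam 0..s, σbar r ^ 2 := by
  obtain ⟨k, mu, hmu0, hmuk, hmu, hpos, hanti, hchord⟩ := exists_upperHull_nodes J hlam hJnodes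
  have hk : 0 < k := Nat.pos_of_ne_zero fun hk => by
    subst hk
    exact (hlam (mem_Iic.2 (Nat.zero_le M)) (mem_Iic.2 le_rfl) hM).ne (hmu0 ▸ hmuk)
  have hG : ∀ j < k, ∀ s ∈ Icc (mu j) (mu (j + 1)), ∫ r in mu 0..s, sqrtSlopeStep J mu k r ^ 2 =
      J (mu j) + slope J (mu j) (mu (j + 1)) * (s - mu j) := fun j hj s hs => by
    rw [integral_sqrtSlopeStep_sq hmu (fun j hj => (hpos j hj).le) hj hs, hmu0, hJ0, sub_zero]
  have hconc := concaveOn_integral_sqrtSlopeStep_sq hmu hanti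
  have hJG : ∀ s ∈ Icc (mu 0) (mu k), J s ≤ ∫ r in mu 0..s, sqrtSlopeStep J mu k r ^ 2 := by
    rw [hmu0, hmuk] at hconc ⊢
    refine fun s hs => le_of_le_of_affineOn_pieces hlam hM hconc hJ (fun i hi => ?_) hs
    obtain ⟨j, hj, hij⟩ := exists_lt_mem_Icc hmu hk (hmu0 ▸ (hlam.mem_Icc_of_le hi).1)
      (hmuk ▸ (hlam.mem_Icc_of_le hi).2)
    rw [← hmu0, hG j hj _ hij]
    exact hchord j hj i hi hij.1
  rw [← hmu0, ← hmuk]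
  refine ⟨sqrtSlopeStep J mu k, ⟨k, hk, mu, rfl, rfl, hmu, isStepOn_sqrtSlopeStep hmu⟩,
    antitoneOn_sqrtSlopeStep hmu hanti, fun s hs => ?_, fun s hs => ?_⟩ <;>
    obtain ⟨j, hj, hsj⟩ := exists_lt_mem_Ioc hs.1 hs.2
  · exact (sqrtSlopeStep_eq hmu hj hsj).symm ▸ Real.sqrt_pos.2 (hpos j hj)
  · exact sInf_concaveMajorants_eq hconc hJG (hmu.mem_Icc_of_le hj.le) (hmu.mem_Icc_of_le hj)
      (Ioc_subset_Icc_self hsj) (eq_add_slope_mul_sub J _ _) (hG j hj s (Ioc_subset_Icc_self hsj))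

/-- A non-increasing left-continuous step function `σ̄ : [0,1] → (0,∞)`, unique on `(0,1]`,
whose squared integral realizes the concave hull `Ĵ` of `J(s) = ∫₀ˢ σ²(r) dr`, where `σ` is a
positive left-continuous step function. -/
theorem stmt7 (M : ℕ) (hM : 1 ≤ M) (lam : ℕ → ℝ) (sig : ℕ → ℝ)
    (hlam0 : lam 0 = 0) (hlamM : lam M = 1)
    (hmono : ∀ i < M, lam i < lam (i + 1))
    (hsigpos : ∀ i, 1 ≤ i → i ≤ M → 0 < sig i)
    (σf : ℝ → ℝ)
    (hσf : ∀ i, 1 ≤ i → i ≤ M → ∀ s ∈ Set.Ioc (lam (i - 1)) (lam i), σf s = sig i)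
    (J : ℝ → ℝ) (hJ : ∀ s, J s = ∫ r in (0 : ℝ)..s, (σf r) ^ 2)
    (Jhat : ℝ → ℝ)
    -- `Jhat` is the concave hull of `J` on `[0,1]` (pointwise infimum of concave majorants)
    (hJhat : ∀ s ∈ Set.Icc (0 : ℝ) 1,
      Jhat s = sInf {y : ℝ | ∃ g : ℝ → ℝ, ConcaveOn ℝ (Set.Icc (0 : ℝ) 1) g ∧
        (∀ x ∈ Set.Icc (0 : ℝ) 1, J x ≤ g x) ∧ y = g s}) :
    ∃ σbar : ℝ → ℝ,
      ((∃ m : ℕ, 1 ≤ m ∧ ∃ mu : ℕ → ℝ, mu 0 = 0 ∧ mu m = 1 ∧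
          (∀ j < m, mu j < mu (j + 1)) ∧
          ∀ j, 1 ≤ j → j ≤ m → ∀ s ∈ Set.Ioc (mu (j - 1)) (mu j), σbar s = σbar (mu j)) ∧
        AntitoneOn σbar (Set.Ioc (0 : ℝ) 1) ∧
        (∀ s ∈ Set.Ioc (0 : ℝ) 1, 0 < σbar s) ∧
        (∀ s ∈ Set.Ioc (0 : ℝ) 1, Jhat s = ∫ r in (0 : ℝ)..s, (σbar r) ^ 2)) ∧
      ∀ σbar' : ℝ → ℝ,
        ((∃ m : ℕ, 1 ≤ m ∧ ∃ mu : ℕ → ℝ, mu 0 = 0 ∧ mu m = 1 ∧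
            (∀ j < m, mu j < mu (j + 1)) ∧
            ∀ j, 1 ≤ j → j ≤ m → ∀ s ∈ Set.Ioc (mu (j - 1)) (mu j), σbar' s = σbar' (mu j)) ∧
          AntitoneOn σbar' (Set.Ioc (0 : ℝ) 1) ∧
          (∀ s ∈ Set.Ioc (0 : ℝ) 1, 0 < σbar' s) ∧
          (∀ s ∈ Set.Ioc (0 : ℝ) 1, Jhat s = ∫ r in (0 : ℝ)..s, (σbar' r) ^ 2)) →
        ∀ s ∈ Set.Ioc (0 : ℝ) 1, σbar' s = σbar s := by
  have hlam : StrictMonoOn lam (Iic M) := strictMonoOn_Iic_of_lt_succ hmono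
  have hσ : IsStepOn lam M σf := isStepOn_iff.2 fun i hi1 hiM s hs =>
    (hσf i hi1 hiM s hs).trans (hσf i hi1 hiM (lam i) ⟨hs.1.trans_le hs.2, le_rfl⟩).symm
  have hσsq : IsStepOn lam M fun r => σf r ^ 2 := hσ.comp (· ^ 2)
  have hJ' : ∀ s, J s = ∫ r in lam 0..s, σf r ^ 2 := fun s => by rw [hJ, hlam0]
  have hJnodes : J ∘ lam = fun i => ∫ r in lam 0..lam i, σf r ^ 2 := funext fun i => hJ' _
  obtain ⟨σbar, ⟨k, hk, mu, hmu0, hmuk, hmu, hstep⟩, hanti, hpos, hhull⟩ :=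
    exists_antitone_step_integral_sq_eq_concaveHull hlam hM
      (by rw [hJ', intervalIntegral.integral_same])
      (fun i hi => ⟨σf (lam (i + 1)) ^ 2, fun s hs => by
        linarith [hJ' s, hJ' (lam i), hσsq.integral_sub_integral hlam hi le_rfl hs.1 hs.2]⟩)
      (hJnodes ▸ hσsq.strictMonoOn_integral hlam fun i hi => by
        rw [hσf (i + 1) (by omega) hi (lam (i + 1)) ⟨by simpa using hmono i hi, le_rfl⟩]
        exact pow_pos (hsigpos (i + 1) (by omega) hi) 2)
  simp only [hlam0, hlamM] at hmu0 hmuk hanti hpos hhull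
  have hJhat' : ∀ s ∈ Ioc (0 : ℝ) 1, Jhat s = ∫ r in (0 : ℝ)..s, σbar r ^ 2 := fun s hs =>
    (hJhat s (Ioc_subset_Icc_self hs)).trans (hhull s hs)
  refine ⟨σbar, ⟨⟨k, hk, mu, hmu0, hmuk, fun j hj => hmu.apply_lt_apply_succ hj,
    isStepOn_iff.1 hstep⟩, hanti, hpos, hJhat'⟩, ?_⟩
  rintro σ' ⟨⟨n, -, nu, hnu0, hnun, hnu, hstep'⟩, -, hpos', hint'⟩ s hs
  have hsq : σ' s ^ 2 = σbar s ^ 2 :=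
    ((isStepOn_iff.2 hstep').comp (· ^ 2)).eq_of_integral_eq (strictMonoOn_Iic_of_lt_succ hnu)
      hnu0 (hstep.comp (· ^ 2)) hmu hmu0 hs.1 (hnun ▸ hs.2) (hmuk ▸ hs.2) fun t ht =>
        (hint' t ⟨ht.1, ht.2.trans hs.2⟩).symm.trans (hJhat' t ⟨ht.1, ht.2.trans hs.2⟩)
  exact (sq_eq_sq₀ (hpos' s hs).le (hpos s hs).le).1 hsq
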